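/- Let S = (Q,R,ℓ) be a durational Kripke structure whose transition weights all lie in a finite set W ⊆ ℕ, and let Φ be a TCTL formula. Define the Kripke structure S' whose state set is Q together with one new state (q,d,q') for each transition (q,d,q') ∈ R, with transitions q → (q,d,q') and (q,d,q') → q' for each (q,d,q') ∈ R, and labelling ℓ'(q) = ℓ(q) ∪ {ok} for q ∈ Q and ℓ'((q,d,q')) = {P_d}, where ok and the P_d (d ∈ W) are fresh atomic propositions. Define Φ̃ from Φ by replacing each subformula E φ U_{∼c} ψ by E (ok → φ̃) U_{C_{∼c}} (ok ∧ ψ̃) and each A φ U_{∼c} ψ by A (ok → φ̃) U_{C_{∼c}} (ok ∧ ψ̃), where C_{∼c} is the counting constraint Σ_{d∈W} d·#P_d ∼ c. Then for every q ∈ Q: q ⊨_S Φ iff q ⊨_{S'} Φ̃. -/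

import Mathlib

open scoped Classical

noncomputable section

/-- A Kripke structure with states `Q` and atomic propositions `AP`. -/
structure Kripke (Q AP : Type) where
  R : Q → Q → Prop
  total : ∀ q, ∃ q', R q q'
  label : Q → AP → Prop

/-- An (infinite) run of a Kripke structure. -/
def Kripke.Run {Q AP : Type} (S : Kripke Q AP) (ρ : ℕ → Q) : Prop :=
  ∀ i, S.R (ρ i) (ρ (i + 1))

/-- A durational Kripke structure: transitions carry integer weights. -/
structure DKS (Q AP : Type) where
  R : Q → ℤ → Q → Prop
  total : ∀ q, ∃ d q', R q d q'
  label : Q → AP → Prop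

/-- A run of a DKS: states `ρ` together with transition weights `δ`. -/
def DKS.Run {Q AP : Type} (S : DKS Q AP) (ρ : ℕ → Q) (δ : ℕ → ℤ) : Prop :=
  ∀ i, S.R (ρ i) (δ i) (ρ (i + 1))

/-- The strict prefix `ρ(0) ⋯ ρ(n-1)` of a run (`n` states). -/
def runPrefix {Q : Type} (ρ : ℕ → Q) (n : ℕ) : List Q :=
  (List.range n).map ρ

/-- The number of states of a finite prefix satisfying a predicate. -/
def countSat {Q : Type} (p : Q → Prop) : List Q → ℕ
  | [] => 0
  | s :: t => (if p s then 1 else 0) + countSat p t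

/-- Comparison operators `<, ≤, =, ≥, >`. -/
inductive Cmp where
  | lt | le | eq | ge | gt

def Cmp.eval : Cmp → ℤ → ℤ → Prop
  | .lt, a, b => a < b
  | .le, a, b => a ≤ b
  | .eq, a, b => a = b
  | .ge, a, b => a ≥ b
  | .gt, a, b => a > b

/-- TCTL formulas: `P | φ∧ψ | ¬φ | E φ U_{∼c} ψ | A φ U_{∼c} ψ`, `c ∈ ℕ`. -/
inductive TCTL (AP : Type) : Type where
  | atom : AP → TCTL AP
  | and : TCTL AP → TCTL AP → TCTL AP
  | not : TCTL AP → TCTL AP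
  | eu : TCTL AP → Cmp → ℕ → TCTL AP → TCTL AP
  | au : TCTL AP → Cmp → ℕ → TCTL AP → TCTL AP

/-- Satisfaction of a TCTL formula at a state of a DKS. -/
def TCTL.sat {Q AP : Type} (S : DKS Q AP) : TCTL AP → Q → Prop
  | .atom p, q => S.label q p
  | .and φ ψ, q => TCTL.sat S φ q ∧ TCTL.sat S ψ q
  | .not φ, q => ¬ TCTL.sat S φ q
  | .eu φ c k ψ, q => ∃ ρ δ, S.Run ρ δ ∧ ρ 0 = q ∧
      ∃ i, TCTL.sat S ψ (ρ i) ∧ c.eval (∑ j ∈ Finset.range i, δ j) (k : ℤ) ∧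
        ∀ j < i, TCTL.sat S φ (ρ j)
  | .au φ c k ψ, q => ∀ ρ δ, S.Run ρ δ → ρ 0 = q →
      ∃ i, TCTL.sat S ψ (ρ i) ∧ c.eval (∑ j ∈ Finset.range i, δ j) (k : ℤ) ∧
        ∀ j < i, TCTL.sat S φ (ρ j)

/-- CCTL formulas whose counting constraints `Σ d·#P_d ∼ c` only count
atomic propositions (with integer coefficients, given as a list of
coefficient/proposition pairs). -/
inductive CC (AP : Type) : Type where
  | atom : AP → CC AP
  | and : CC AP → CC AP → CC AP
  | not : CC AP → CC AP
  | eu : CC AP → List (ℤ × AP) → Cmp → ℕ → CC AP → CC AP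
  | au : CC AP → List (ℤ × AP) → Cmp → ℕ → CC AP → CC AP

/-- Value of the constraint expression `Σ d·#P_d` on a finite prefix. -/
def ccval {Q AP : Type} (S : Kripke Q AP) (l : List (ℤ × AP)) (σ : List Q) : ℤ :=
  (l.map (fun t => t.1 * (countSat (fun s => S.label s t.2) σ : ℤ))).sum

/-- Satisfaction of a counting formula at a state of a Kripke structure. -/
def CC.sat {Q AP : Type} (S : Kripke Q AP) : CC AP → Q → Prop
  | .atom p, q => S.label q p
  | .and φ ψ, q => CC.sat S φ q ∧ CC.sat S ψ q
  | .not φ, q => ¬ CC.sat S φ q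
  | .eu φ l c k ψ, q => ∃ ρ, S.Run ρ ∧ ρ 0 = q ∧
      ∃ i, CC.sat S ψ (ρ i) ∧ c.eval (ccval S l (runPrefix ρ i)) (k : ℤ) ∧
        ∀ j < i, CC.sat S φ (ρ j)
  | .au φ l c k ψ, q => ∀ ρ, S.Run ρ → ρ 0 = q →
      ∃ i, CC.sat S ψ (ρ i) ∧ c.eval (ccval S l (runPrefix ρ i)) (k : ℤ) ∧
        ∀ j < i, CC.sat S φ (ρ j)

/-- Fresh atomic propositions: `Sum.inr none` is `ok` and `Sum.inr (some d)`
is `P_d`; original propositions are embedded via `Sum.inl`. -/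
abbrev APx (AP : Type) := AP ⊕ (Option ℤ)

def okP {AP : Type} : APx AP := Sum.inr none

def wP {AP : Type} (d : ℤ) : APx AP := Sum.inr (some d)

/-- `φ → ψ` (derived). -/
def CC.impl {AP : Type} (φ ψ : CC AP) : CC AP := .not (.and φ (.not ψ))

/-- The constraint `C_{∼c} = Σ_{d∈W} d·#P_d ∼ c` as a coefficient list. -/
def constrW {AP : Type} (W : Finset ℤ) : List (ℤ × APx AP) :=
  W.toList.map (fun d => (d, wP d))

/-- The translation `Φ ↦ Φ̃`. -/
def tilde {AP : Type} (W : Finset ℤ) : TCTL AP → CC (APx AP)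
  | .atom p => .atom (Sum.inl p)
  | .and φ ψ => .and (tilde W φ) (tilde W ψ)
  | .not φ => .not (tilde W φ)
  | .eu φ c k ψ =>
      .eu (CC.impl (.atom okP) (tilde W φ)) (constrW W) c k
        (.and (.atom okP) (tilde W ψ))
  | .au φ c k ψ =>
      .au (CC.impl (.atom okP) (tilde W φ)) (constrW W) c k
        (.and (.atom okP) (tilde W ψ))

/-- The state set of `S'`: the states of `S` together with one new state
per transition of `S`. -/
def QxT {Q AP : Type} (S : DKS Q AP) : Type :=
  Q ⊕ {t : Q × ℤ × Q // S.R t.1 t.2.1 t.2.2}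

/-- The Kripke structure `S'` obtained from the DKS `S` by splitting every
transition `(q,d,q')` through a fresh intermediate state labelled `P_d`;
states of `Q` are additionally labelled `ok`. -/
def splitKS {Q AP : Type} (S : DKS Q AP) : Kripke (QxT S) (APx AP) where
  R := fun a b =>
    match a, b with
    | Sum.inl q, Sum.inr e => e.val.1 = q
    | Sum.inr e, Sum.inl q' => e.val.2.2 = q'
    | _, _ => False
  total := by
    rintro (q | e)
    · obtain ⟨d, q', h⟩ := S.total q
      exact ⟨Sum.inr ⟨(q, d, q'), h⟩, rfl⟩
    · exact ⟨Sum.inl e.val.2.2, rfl⟩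
  label := fun a P =>
    match a, P with
    | Sum.inl q, Sum.inl p => S.label q p
    | Sum.inl _, Sum.inr none => True
    | Sum.inl _, Sum.inr (some _) => False
    | Sum.inr _, Sum.inl _ => False
    | Sum.inr _, Sum.inr none => False
    | Sum.inr e, Sum.inr (some d) => e.val.2.1 = d

/-! ### Auxiliary lemmas -/

section Aux

lemma countSat_append {Q : Type} (p : Q → Prop) (l₁ l₂ : List Q) :
    countSat p (l₁ ++ l₂) = countSat p l₁ + countSat p l₂ := by
  induction l₁ with
  | nil => simp [countSat]
  | cons a t ih =>
    show (if p a then 1 else 0) + countSat p (t ++ l₂) =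
      ((if p a then 1 else 0) + countSat p t) + countSat p l₂
    rw [ih]; omega

lemma runPrefix_succ {Q : Type} (ρ : ℕ → Q) (n : ℕ) :
    runPrefix ρ (n + 1) = runPrefix ρ n ++ [ρ n] := by
  simp [runPrefix, List.range_succ]

lemma ccval_nil {Q AP : Type} (S : Kripke Q AP) (l : List (ℤ × AP)) :
    ccval S l [] = 0 := by
  simp [ccval, countSat]

lemma ccval_append {Q AP : Type} (S : Kripke Q AP) (l : List (ℤ × AP))
    (σ₁ σ₂ : List Q) :
    ccval S l (σ₁ ++ σ₂) = ccval S l σ₁ + ccval S l σ₂ := by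
  induction l with
  | nil => simp [ccval]
  | cons a t ih =>
    simp only [ccval, List.map_cons, List.sum_cons] at ih ⊢
    rw [countSat_append]
    push_cast
    rw [ih]
    ring

lemma sum_ite_list (l : List ℤ) (h : l.Nodup) (w : ℤ) (hw : w ∈ l) :
    (l.map (fun d => if w = d then d else 0)).sum = w := by
  induction l with
  | nil => simp at hw
  | cons a t ih =>
    simp only [List.nodup_cons] at h
    simp only [List.mem_cons] at hw
    simp only [List.map_cons, List.sum_cons]
    rcases hw with rfl | hw
    · rw [if_pos rfl]
      have : ∀ x ∈ t.map (fun d => if w = d then d else 0), x = 0 := by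
        intro x hx
        simp only [List.mem_map] at hx
        obtain ⟨d, hd, rfl⟩ := hx
        exact if_neg (by rintro rfl; exact h.1 hd)
      rw [List.sum_eq_zero this]; ring
    · rw [if_neg (by rintro rfl; exact h.1 hw), ih h.2 hw]; ring

lemma ccval_inl {Q AP : Type} (S : DKS Q AP) (W : Finset ℤ) (q : Q) :
    ccval (splitKS S) (constrW W : List (ℤ × APx AP)) [Sum.inl q] = 0 := by
  unfold ccval constrW
  rw [List.map_map]
  apply List.sum_eq_zero
  intro x hx
  simp only [List.mem_map] at hx
  obtain ⟨d, _, rfl⟩ := hx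
  have : countSat (fun s => (splitKS S).label s (wP d)) [Sum.inl q] = 0 := by
    simp [countSat, splitKS, wP]
  simp [this]

lemma ccval_inr {Q AP : Type} (S : DKS Q AP) (W : Finset ℤ)
    (e : {t : Q × ℤ × Q // S.R t.1 t.2.1 t.2.2}) (hmem : e.val.2.1 ∈ W) :
    ccval (splitKS S) (constrW W : List (ℤ × APx AP)) [Sum.inr e] = e.val.2.1 := by
  unfold ccval constrW
  rw [List.map_map]
  have heq : ∀ d : ℤ,
      ((fun t : ℤ × APx AP => t.1 *
        (countSat (fun s => (splitKS S).label s t.2) [Sum.inr e] : ℤ)) ∘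
        (fun d => (d, wP d))) d
      = if e.val.2.1 = d then d else 0 := by
    intro d
    simp only [Function.comp, countSat, splitKS, wP]
    by_cases h : e.val.2.1 = d
    · rw [if_pos h]; subst h; simp
    · rw [if_neg h]; simp [h]
  rw [List.map_congr_left (fun d _ => heq d)]
  exact sum_ite_list W.toList W.nodup_toList _ (by simpa using hmem)

/-- The interleaved run of `S'` corresponding to a run `(ρ, δ)` of `S`. -/
def buildRun {Q AP : Type} (S : DKS Q AP) (ρ : ℕ → Q) (δ : ℕ → ℤ)
    (h : S.Run ρ δ) : ℕ → QxT S :=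
  fun i => if i % 2 = 0 then Sum.inl (ρ (i / 2))
    else Sum.inr ⟨(ρ (i / 2), δ (i / 2), ρ (i / 2 + 1)), h (i / 2)⟩

/-- `σ` interleaves the run `(ρ, δ)` with intermediate transition states. -/
def Matched {Q AP : Type} (S : DKS Q AP) (σ : ℕ → QxT S) (ρ : ℕ → Q)
    (δ : ℕ → ℤ) : Prop :=
  (∀ i, σ (2 * i) = Sum.inl (ρ i)) ∧
  (∀ i, ∃ e : {t : Q × ℤ × Q // S.R t.1 t.2.1 t.2.2},
      σ (2 * i + 1) = Sum.inr e ∧ e.val = (ρ i, δ i, ρ (i + 1)))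

lemma buildRun_even {Q AP : Type} (S : DKS Q AP) (ρ : ℕ → Q) (δ : ℕ → ℤ)
    (h : S.Run ρ δ) (i : ℕ) : buildRun S ρ δ h (2 * i) = Sum.inl (ρ i) := by
  have h1 : (2 * i) % 2 = 0 := by omega
  have h2 : (2 * i) / 2 = i := by omega
  simp [buildRun, h1, h2]
  rfl

lemma buildRun_odd {Q AP : Type} (S : DKS Q AP) (ρ : ℕ → Q) (δ : ℕ → ℤ)
    (h : S.Run ρ δ) (i : ℕ) :
    buildRun S ρ δ h (2 * i + 1) =
      Sum.inr ⟨(ρ i, δ i, ρ (i + 1)), h i⟩ := by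
  have h1 : ¬ (2 * i + 1) % 2 = 0 := by omega
  have h2 : (2 * i + 1) / 2 = i := by omega
  simp [buildRun, h1, h2]
  rfl

lemma buildRun_matched {Q AP : Type} (S : DKS Q AP) (ρ : ℕ → Q) (δ : ℕ → ℤ)
    (h : S.Run ρ δ) : Matched S (buildRun S ρ δ h) ρ δ :=
  ⟨fun i => buildRun_even S ρ δ h i,
   fun i => ⟨⟨(ρ i, δ i, ρ (i + 1)), h i⟩, buildRun_odd S ρ δ h i, rfl⟩⟩

lemma buildRun_isRun {Q AP : Type} (S : DKS Q AP) (ρ : ℕ → Q) (δ : ℕ → ℤ)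
    (h : S.Run ρ δ) : (splitKS S).Run (buildRun S ρ δ h) := by
  intro i
  rcases Nat.even_or_odd i with ⟨m, hm⟩ | ⟨m, hm⟩
  · have hi : i = 2 * m := by omega
    subst hi
    rw [buildRun_even, buildRun_odd]
    show (_ : Q × ℤ × Q).1 = _
    rfl
  · have hi : i = 2 * m + 1 := by omega
    subst hi
    rw [buildRun_odd, show 2 * m + 1 + 1 = 2 * (m + 1) by ring, buildRun_even]
    show (_ : Q × ℤ × Q).2.2 = _
    rfl

lemma step_inl {Q AP : Type} (S : DKS Q AP) (q : Q) (b : QxT S)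
    (h : (splitKS S).R (Sum.inl q) b) :
    ∃ e : {t : Q × ℤ × Q // S.R t.1 t.2.1 t.2.2},
      b = Sum.inr e ∧ e.val.1 = q := by
  cases b with
  | inl q' => exact absurd h (by simp [splitKS])
  | inr e => exact ⟨e, rfl, h⟩

lemma step_inr {Q AP : Type} (S : DKS Q AP)
    (e : {t : Q × ℤ × Q // S.R t.1 t.2.1 t.2.2}) (b : QxT S)
    (h : (splitKS S).R (Sum.inr e) b) : b = Sum.inl e.val.2.2 := by
  cases b with
  | inl q' => exact congrArg Sum.inl h.symm
  | inr e' => exact absurd h (by simp [splitKS])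

/-- Every run of `S'` starting in an original state is interleaved. -/
lemma extract_run {Q AP : Type} (S : DKS Q AP) (σ : ℕ → QxT S)
    (hσ : (splitKS S).Run σ) (q : Q) (h0 : σ 0 = Sum.inl q) :
    ∃ ρ δ, S.Run ρ δ ∧ ρ 0 = q ∧ Matched S σ ρ δ := by
  have hexl : ∀ i, ∃ q', σ (2 * i) = Sum.inl q' := by
    intro i
    induction i with
    | zero => exact ⟨q, h0⟩
    | succ n ih =>
      obtain ⟨q', hq'⟩ := ih
      obtain ⟨e, he, _⟩ := step_inl S q' (σ (2 * n + 1)) (hq' ▸ hσ (2 * n))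
      have := step_inr S e (σ (2 * n + 1 + 1)) (he ▸ hσ (2 * n + 1))
      exact ⟨e.val.2.2, by rw [show 2 * (n + 1) = 2 * n + 1 + 1 by ring, this]⟩
  choose ρ hρ using hexl
  have hexe : ∀ i, ∃ e : {t : Q × ℤ × Q // S.R t.1 t.2.1 t.2.2},
      σ (2 * i + 1) = Sum.inr e ∧ e.val.1 = ρ i := by
    intro i
    exact step_inl S (ρ i) (σ (2 * i + 1)) (hρ i ▸ hσ (2 * i))
  choose e he1 he2 using hexe
  have he3 : ∀ i, (e i).val.2.2 = ρ (i + 1) := by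
    intro i
    have h1 := step_inr S (e i) (σ (2 * i + 1 + 1)) (he1 i ▸ hσ (2 * i + 1))
    have h2 := hρ (i + 1)
    rw [show 2 * (i + 1) = 2 * i + 1 + 1 by ring] at h2
    exact (Sum.inl.injEq _ _ ▸ (h1.symm.trans h2) : _)
  refine ⟨ρ, fun i => (e i).val.2.1, ?_,
    Sum.inl_injective ((hρ 0).symm.trans h0), hρ, ?_⟩
  · intro i
    have := (e i).property
    rwa [he2 i, he3 i] at this
  · intro i
    refine ⟨e i, he1 i, ?_⟩
    have := he2 i
    have := he3 i
    ext <;> simp_all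

lemma ccval_prefix {Q AP : Type} (S : DKS Q AP) (W : Finset ℤ)
    (σ : ℕ → QxT S) (ρ : ℕ → Q) (δ : ℕ → ℤ)
    (hM : Matched S σ ρ δ) (hδ : ∀ i, δ i ∈ W) (i : ℕ) :
    ccval (splitKS S) (constrW W : List (ℤ × APx AP)) (runPrefix σ (2 * i)) =
      ∑ j ∈ Finset.range i, δ j := by
  induction i with
  | zero => simp [runPrefix, ccval_nil]
  | succ n ih =>
    obtain ⟨e, he, hev⟩ := hM.2 n
    rw [show 2 * (n + 1) = (2 * n + 1) + 1 by ring, runPrefix_succ,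
      runPrefix_succ, ccval_append, ccval_append, ih, hM.1 n, he,
      ccval_inl, ccval_inr S W e (by rw [hev]; exact hδ n),
      Finset.sum_range_succ, hev]
    simp

/-- Core transfer lemma between until-witnesses on matched runs. -/
lemma transfer {Q AP : Type} (S : DKS Q AP) (W : Finset ℤ)
    (hW : ∀ q d q', S.R q d q' → d ∈ W)
    (φ ψ : TCTL AP) (φ' ψ' : CC (APx AP))
    (ihφ : ∀ q, TCTL.sat S φ q ↔ CC.sat (splitKS S) φ' (Sum.inl q))
    (ihψ : ∀ q, TCTL.sat S ψ q ↔ CC.sat (splitKS S) ψ' (Sum.inl q))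
    (c : Cmp) (k : ℕ)
    (σ : ℕ → QxT S) (ρ : ℕ → Q) (δ : ℕ → ℤ)
    (hRun : S.Run ρ δ) (hM : Matched S σ ρ δ) :
    (∃ i, TCTL.sat S ψ (ρ i) ∧
        c.eval (∑ j ∈ Finset.range i, δ j) (k : ℤ) ∧
        ∀ j < i, TCTL.sat S φ (ρ j)) ↔
    (∃ i, CC.sat (splitKS S) (.and (.atom okP) ψ') (σ i) ∧
        c.eval (ccval (splitKS S) (constrW W) (runPrefix σ i)) (k : ℤ) ∧
        ∀ j < i, CC.sat (splitKS S) (CC.impl (.atom okP) φ') (σ j)) := by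
  have hδ : ∀ i, δ i ∈ W := fun i => hW _ _ _ (hRun i)
  have hccv := ccval_prefix S W σ ρ δ hM hδ
  constructor
  · rintro ⟨i, hψ, hc, hφ⟩
    refine ⟨2 * i, ?_, by rw [hccv]; exact hc, ?_⟩
    · rw [hM.1 i]
      exact ⟨trivial, (ihψ _).1 hψ⟩
    · intro j hj
      rcases Nat.even_or_odd j with ⟨m, hm⟩ | ⟨m, hm⟩
      · have hje : j = 2 * m := by omega
        subst hje
        rw [hM.1 m]
        simp only [CC.impl, CC.sat]
        rintro ⟨_, hn⟩
        exact hn ((ihφ _).1 (hφ m (by omega)))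
      · have hje : j = 2 * m + 1 := by omega
        subst hje
        obtain ⟨e, he, _⟩ := hM.2 m
        rw [he]
        simp only [CC.impl, CC.sat]
        rintro ⟨hok, _⟩
        exact hok
  · rintro ⟨i, hψ, hc, hφ⟩
    have hieven : ∃ m, i = 2 * m := by
      rcases Nat.even_or_odd i with ⟨m, hm⟩ | ⟨m, hm⟩
      · exact ⟨m, by omega⟩
      · exfalso
        obtain ⟨e, he, _⟩ := hM.2 m
        rw [show i = 2 * m + 1 by omega, he] at hψ
        exact hψ.1
    obtain ⟨m, rfl⟩ := hieven
    rw [hM.1 m] at hψ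
    refine ⟨m, (ihψ _).2 hψ.2, by rw [hccv] at hc; exact hc, ?_⟩
    intro j hj
    have hφj := hφ (2 * j) (by omega)
    rw [hM.1 j] at hφj
    simp only [CC.impl, CC.sat] at hφj
    apply (ihφ _).2
    by_contra hn
    exact hφj ⟨trivial, hn⟩

end Aux

/-- for a DKS `S` with weights in a finite set `W ⊆ ℕ` and a
TCTL formula `Φ`, `q ⊨_S Φ` iff `q ⊨_{S'} Φ̃`. -/
theorem tctl_to_counting
    {Q AP : Type} [Fintype Q] (S : DKS Q AP) (W : Finset ℤ)
    (hWpos : ∀ d ∈ W, 0 ≤ d)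
    (hW : ∀ q d q', S.R q d q' → d ∈ W)
    (Φ : TCTL AP) (q : Q) :
    TCTL.sat S Φ q ↔ CC.sat (splitKS S) (tilde W Φ) (Sum.inl q) := by
  induction Φ generalizing q with
  | atom p => exact Iff.rfl
  | and φ ψ ihφ ihψ =>
    simp only [TCTL.sat, tilde, CC.sat, ihφ, ihψ]
  | not φ ih =>
    simp only [TCTL.sat, tilde, CC.sat, ih]
  | eu φ c k ψ ihφ ihψ =>
    simp only [TCTL.sat, tilde, CC.sat]
    constructor
    · rintro ⟨ρ, δ, hRun, h0, hex⟩
      refine ⟨buildRun S ρ δ hRun, buildRun_isRun S ρ δ hRun, ?_, ?_⟩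
      · rw [show (0 : ℕ) = 2 * 0 by rfl, buildRun_even, h0]
      · exact (transfer S W hW φ ψ _ _ ihφ ihψ c k _ ρ δ hRun
          (buildRun_matched S ρ δ hRun)).1 hex
    · rintro ⟨σ, hσ, h0, hex⟩
      obtain ⟨ρ, δ, hRun, hρ0, hM⟩ := extract_run S σ hσ q h0
      exact ⟨ρ, δ, hRun, hρ0,
        (transfer S W hW φ ψ _ _ ihφ ihψ c k σ ρ δ hRun hM).2 hex⟩
  | au φ c k ψ ihφ ihψ =>
    simp only [TCTL.sat, tilde, CC.sat]
    constructor
    · intro h σ hσ h0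
      obtain ⟨ρ, δ, hRun, hρ0, hM⟩ := extract_run S σ hσ q h0
      exact (transfer S W hW φ ψ _ _ ihφ ihψ c k σ ρ δ hRun hM).1
        (h ρ δ hRun hρ0)
    · intro h ρ δ hRun h0
      apply (transfer S W hW φ ψ _ _ ihφ ihψ c k _ ρ δ hRun
        (buildRun_matched S ρ δ hRun)).2
      exact h (buildRun S ρ δ hRun) (buildRun_isRun S ρ δ hRun)
        (by rw [show (0 : ℕ) = 2 * 0 by rfl, buildRun_even, h0])
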